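/- Let F be a set of real-valued functions on a set H that is closed under negation (f ∈ F implies -f ∈ F), and let V1, V2 : H → ℝ. Suppose ψ : {-1,1} × ℝ → ℝ satisfies ψ(a, x) = ψ(-a, -x) and sign(ψ(1, x) - ψ(-1, x)) = sign(x) for all x. Fix h ∈ H. If f* ∈ F maximizes T(f) = ψ(1, f(h))·V1(h) + ψ(-1, f(h))·V2(h) over F, then sign(f*(h)) = sign(V1(h) - V2(h)) whenever V1(h) ≠ V2(h) and f*(h) ≠ 0. -/

import Mathlib

/-!
Replacing `f*` by `-f*` (allowed since `F` is closed under negation) swaps the two values of `ψ`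
by the symmetry of `ψ`, so maximality of `f*` gives `0 ≤ (ψ(1, x) - ψ(-1, x)) (V1 h - V2 h)` with
`x = f*(h)`. Both factors are nonzero, hence have the same sign, and the first has the sign of `x`.
-/

theorem Real.sign_eq_sign_of_mul_nonneg {a b : ℝ} (hab : 0 ≤ a * b) (ha : a ≠ 0) (hb : b ≠ 0) :
    Real.sign a = Real.sign b := by
  rcases ha.lt_or_gt with ha | ha <;> rcases hb.lt_or_gt with hb | hb
  · rw [Real.sign_of_neg ha, Real.sign_of_neg hb]
  · nlinarith
  · nlinarith
  · rw [Real.sign_of_pos ha, Real.sign_of_pos hb]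

theorem sub_ne_zero_of_sign_sub_eq_sign {ψ : ℝ → ℝ → ℝ}
    (hsign : ∀ x : ℝ, Real.sign (ψ 1 x - ψ (-1) x) = Real.sign x) {x : ℝ} (hx : x ≠ 0) :
    ψ 1 x - ψ (-1) x ≠ 0 := by
  intro hzero
  apply hx
  rw [← Real.sign_eq_zero_iff, ← hsign, hzero, Real.sign_zero]

theorem apply_neg_eq_of_symm {ψ : ℝ → ℝ → ℝ}
    (hsym : ∀ a ∈ ({-1, 1} : Set ℝ), ∀ x : ℝ, ψ a x = ψ (-a) (-x)) (x : ℝ) :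
    ψ 1 (-x) = ψ (-1) x ∧ ψ (-1) (-x) = ψ 1 x := by
  constructor
  · simpa using hsym 1 (by simp) (-x)
  · simpa using hsym (-1) (by simp) (-x)

theorem stmt0_general {H : Type*} (F : Set (H → ℝ))
    (hFneg : ∀ f ∈ F, (fun h => -f h) ∈ F)
    (V1 V2 : H → ℝ) (ψ : ℝ → ℝ → ℝ)
    (hsym : ∀ a ∈ ({-1, 1} : Set ℝ), ∀ x : ℝ, ψ a x = ψ (-a) (-x))
    (hsign : ∀ x : ℝ, Real.sign (ψ 1 x - ψ (-1) x) = Real.sign x)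
    (h : H) (fstar : H → ℝ) (hmem : fstar ∈ F)
    (hmax : ∀ f ∈ F, ψ 1 (f h) * V1 h + ψ (-1) (f h) * V2 h ≤
      ψ 1 (fstar h) * V1 h + ψ (-1) (fstar h) * V2 h)
    (hne : V1 h ≠ V2 h) (hfne : fstar h ≠ 0) :
    Real.sign (fstar h) = Real.sign (V1 h - V2 h) := by
  have hneg := hmax _ (hFneg fstar hmem)
  obtain ⟨hflip₁, hflip₂⟩ := apply_neg_eq_of_symm hsym (fstar h)
  rw [hflip₁, hflip₂] at hneg
  have hgap : 0 ≤ (ψ 1 (fstar h) - ψ (-1) (fstar h)) * (V1 h - V2 h) := by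
    linear_combination hneg
  rw [← hsign]
  exact Real.sign_eq_sign_of_mul_nonneg hgap (sub_ne_zero_of_sign_sub_eq_sign hsign hfne)
    (sub_ne_zero.mpr hne)

theorem stmt0 {H : Type*} (F : Set (H → ℝ))
    (hFne : F.Nonempty)
    (hFneg : ∀ f ∈ F, (fun h => -f h) ∈ F)
    (V1 V2 : H → ℝ) (ψ : ℝ → ℝ → ℝ)
    (hsym : ∀ a ∈ ({-1, 1} : Set ℝ), ∀ x : ℝ, ψ a x = ψ (-a) (-x))
    (hsign : ∀ x : ℝ, Real.sign (ψ 1 x - ψ (-1) x) = Real.sign x)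
    (h : H) (fstar : H → ℝ) (hmem : fstar ∈ F)
    (hmax : ∀ f ∈ F, ψ 1 (f h) * V1 h + ψ (-1) (f h) * V2 h ≤
      ψ 1 (fstar h) * V1 h + ψ (-1) (fstar h) * V2 h)
    (hne : V1 h ≠ V2 h) (hfne : fstar h ≠ 0) :
    Real.sign (fstar h) = Real.sign (V1 h - V2 h) :=
  stmt0_general F hFneg V1 V2 ψ hsym hsign h fstar hmem hmax hne hfne
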